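/- arXiv:0707.1435 — 10 statements merged into one kernel-verified Lean document; each statement's English description precedes it below -/
import Mathlib

section
/- A loop L is an LC-loop (i.e., satisfies (x·(x·y))·z = x·(x·(y·z)) for all x,y,z) if and only if for every two left translations α, β of L, the composite α∘β² (first apply β twice, then α, in the convention where L_x(y) = x·y and composition means y ↦ α(β(β(y)))) is again a left translation of L. -/
/-- A loop `L` is an LC-loop iff for all left translations `α = L_x`,
`β = L_y`, the map `t ↦ α (β (β t)) = x·(y·(y·t))` is again a left translation. -/
theorem lc_iff_left_translations_closed (L : Type*) [Mul L] [One L]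
    (hone : ∀ a : L, 1 * a = a) (hone' : ∀ a : L, a * 1 = a)
    (hleft : ∀ a : L, Function.Bijective fun y : L => a * y)
    (hright : ∀ a : L, Function.Bijective fun y : L => y * a) :
    (∀ x y z : L, (x * (x * y)) * z = x * (x * (y * z))) ↔
      (∀ x y : L, ∃ c : L, ∀ t : L, x * (y * (y * t)) = c * t) := by
  -- Division infrastructure
  have lcancel : ∀ a b c : L, a * b = a * c → b = c := fun a b c h => (hleft a).1 h
  have rcancel : ∀ a b c : L, b * a = c * a → b = c := fun a b c h => (hright a).1 h
  have H1 : ∀ a b : L, ∃ w, a * w = b := fun a b => (hleft a).2 b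
  choose ld mul_ld using H1
  have H2 : ∀ a b : L, ∃ w, w * b = a := fun a b => (hright b).2 a
  choose rd rd_mul using H2
  have ld_mul : ∀ a b : L, ld a (a * b) = b := fun a b =>
    lcancel a _ _ (mul_ld a (a * b))
  have ld_unique : ∀ a b w : L, a * w = b → ld a b = w := fun a b w h =>
    lcancel a _ _ ((mul_ld a b).trans h.symm)
  constructor
  · -- forward: LC ⟹ closure
    intro hLC x y
    -- key : (w*(a*a))*v = w*(a*(a*v))
    have S36 : ∀ a : L, ld a 1 * a = 1 := by
      intro a
      -- first : (a\1)\1 = a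
      have S32 : (a * (a * ld a 1)) * ld (ld a 1) 1 = a * a := by
        have h1 := hLC a (ld a 1) (ld (ld a 1) 1)
        rw [mul_ld (ld a 1) 1, hone'] at h1
        exact h1
      rw [mul_ld a 1, hone'] at S32
      have h2 : ld (ld a 1) 1 = a := lcancel a _ _ (S32.trans (rfl : a * a = a * a))
      have h3 := mul_ld (ld a 1) 1
      rw [h2] at h3
      exact h3
    have S38 : ∀ a z : L, ld a 1 * (a * z) = z := by
      intro a z
      apply lcancel (ld a 1)
      have h1 := hLC (ld a 1) a z
      rw [S36 a, hone'] at h1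
      exact h1.symm
    have S39 : ∀ a z : L, ld (ld a 1) z = a * z := fun a z =>
      ld_unique _ _ _ (S38 a z)
    have S49 : ∀ x u : L, (x * (x * ld u 1)) * u = x * x := by
      intro x u
      have h1 := hLC x (ld u 1) u
      rw [S36 u, hone'] at h1
      exact h1
    have S111 : ∀ x w : L, x * (x * ld (w * (x * x)) 1) = ld w 1 := by
      intro x w
      apply rcancel (w * (x * x))
      rw [S49 x (w * (x * x)), S38 w (x * x)]
    have key : ∀ w a v : L, (w * (a * a)) * v = w * (a * (a * v)) := by
      intro w a v
      apply lcancel (ld w 1)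
      rw [S38 w (a * (a * v))]
      have h1 := hLC a (ld (w * (a * a)) 1) (ld (ld (w * (a * a)) 1) v)
      rw [S111 a w, mul_ld (ld (w * (a * a)) 1) v, S39 (w * (a * a)) v] at h1
      exact h1
    exact ⟨x * (y * y), fun t => (key x y t).symm⟩
  · -- reverse: closure ⟹ LC
    intro H
    have key : ∀ x y z : L, (x * (y * y)) * z = x * (y * (y * z)) := by
      intro x y z
      obtain ⟨c, hc⟩ := H x y
      have h1 := hc 1
      rw [hone' y, hone' c] at h1
      rw [← h1] at hc
      exact (hc z).symm
    have R85 : ∀ x y w : L, y * (y * ld (x * (y * y)) w) = ld x w := by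
      intro x y w
      apply lcancel x
      rw [mul_ld x w, ← key x y (ld (x * (y * y)) w), mul_ld (x * (y * y)) w]
    have R41 : ∀ y : L, rd 1 y * (y * y) = y := by
      intro y
      apply rcancel (ld y 1)
      have h1 := key (rd 1 y) y (ld y 1)
      rw [mul_ld y 1, hone' y, rd_mul 1 y] at h1
      -- h1 : (rd 1 y * (y*y)) * ld y 1 = 1
      rw [h1, mul_ld y 1]
    have R43 : ∀ y u : L, rd 1 y * (y * u) = u := by
      intro y u
      have h1 := key (rd 1 y) y (ld y u)
      rw [R41 y, mul_ld y u] at h1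
      exact h1.symm
    have R45 : ∀ y : L, y * rd 1 y = 1 := by
      intro y
      apply lcancel (rd 1 y)
      rw [R43 y (rd 1 y), hone']
    have R46 : ∀ y : L, ld y 1 = rd 1 y := fun y => ld_unique _ _ _ (R45 y)
    have R47 : ∀ y : L, ld y 1 * y = 1 := by
      intro y
      rw [R46 y]
      have h1 := R43 y 1
      rw [hone' y] at h1
      exact h1
    have R52 : ∀ y w : L, ld (ld y 1) w = y * w := by
      intro y w
      apply ld_unique
      rw [R46 y]
      exact R43 y w
    have R100 : ∀ y z : L, ld (y * (y * z)) 1 * (y * y) = ld z 1 := by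
      intro y z
      apply rcancel z
      rw [R47 z]
      have h1 := key (ld (y * (y * z)) 1) y z
      rw [R47 (y * (y * z))] at h1
      exact h1
    intro x y z
    have G : ∀ y z w : L, (y * (y * z)) * w = y * (y * (z * w)) := by
      intro y z w
      have h1 := R85 (ld (y * (y * z)) 1) y w
      rw [R100 y z, R52 z w, R52 (y * (y * z)) w] at h1
      exact h1.symm
    exact G x y z
end

section
/- A loop L is an RC-loop (i.e., satisfies z·((y·x)·x) = ((z·y)·x)·x for all x,y,z) if and only if for every two right translations α, β of L, the composite consisting of applying α then β twice is again a right translation of L. -/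
/-- A loop `L` is an RC-loop iff for all right translations
`α = R_x`, `β = R_y`, the map `t ↦ ((t·x)·y)·y` (apply `α` then `β` twice)
is again a right translation. -/
theorem rc_iff_right_translations_closed (L : Type*) [Mul L] [One L]
    (hone : ∀ a : L, 1 * a = a) (hone' : ∀ a : L, a * 1 = a)
    (hleft : ∀ a : L, Function.Bijective fun y : L => a * y)
    (hright : ∀ a : L, Function.Bijective fun y : L => y * a) :
    (∀ x y z : L, z * ((y * x) * x) = ((z * y) * x) * x) ↔
      (∀ x y : L, ∃ c : L, ∀ t : L, ((t * x) * y) * y = t * c) := by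
  constructor
  · intro h x y
    exact ⟨(x * y) * y, fun t => (h y x t).symm⟩
  · intro h x y z
    obtain ⟨c, hc⟩ := h y x
    have h1 := hc 1
    rw [hone, hone] at h1
    rw [hc z, ← h1]
end

section
/- In an LC-loop L, if β is a left translation, then βⁿ is a left translation for every integer n (in particular β⁻¹ = L_{x⁻¹} when β = L_x). -/
/-- In an LC-loop, every integer power of a left translation
(as a permutation) is a left translation. -/
theorem lc_left_translation_zpow (L : Type*) [Mul L] [One L]
    (hone : ∀ a : L, 1 * a = a) (hone' : ∀ a : L, a * 1 = a)
    (hleft : ∀ a : L, Function.Bijective fun y : L => a * y)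
    (hright : ∀ a : L, Function.Bijective fun y : L => y * a)
    (hLC : ∀ x y z : L, (x * (x * y)) * z = x * (x * (y * z))) :
    ∀ β : Equiv.Perm L, (∃ x : L, ∀ t : L, β t = x * t) →
      ∀ n : ℤ, ∃ c : L, ∀ t : L, (β ^ n) t = c * t := by
  -- natural number powers of a left translation are left translations
  have key : ∀ (γ : Equiv.Perm L) (y : L), (∀ t : L, γ t = y * t) →
      ∀ m : ℕ, ∃ c : L, ∀ t : L, (γ ^ m) t = c * t := by
    intro γ y hy m
    have H : ∀ m : ℕ, (∃ c : L, ∀ t : L, (γ ^ m) t = c * t) ∧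
        (∃ c : L, ∀ t : L, (γ ^ (m + 1)) t = c * t) := by
      intro m
      induction m with
      | zero =>
        constructor
        · exact ⟨1, fun t => by simp [hone]⟩
        · exact ⟨y, fun t => by simpa using hy t⟩
      | succ k ih =>
        refine ⟨ih.2, ?_⟩
        obtain ⟨c, hc⟩ := ih.1
        refine ⟨y * (y * c), fun t => ?_⟩
        have : γ ^ (k + 1 + 1) = γ * (γ * γ ^ k) := by
          rw [pow_succ' γ (k + 1), pow_succ' γ k]
        rw [this]
        simp only [Equiv.Perm.mul_apply, hc, hy]
        exact (hLC y c t).symm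
    exact (H m).1
  intro β ⟨x, hx⟩ n
  -- β⁻¹ is also a left translation
  obtain ⟨y, hy⟩ := (hleft x).2 (1 : L)
  simp only at hy
  have hid : ∀ z : L, x * (y * z) = z := by
    intro z
    have h := hLC x y z
    rw [hy, hone' x] at h
    exact ((hleft x).1 h).symm
  have hinv : ∀ t : L, β⁻¹ t = y * t := by
    intro t
    have : β (y * t) = t := by rw [hx, hid]
    calc β⁻¹ t = β⁻¹ (β (y * t)) := by rw [this]
    _ = y * t := β.symm_apply_apply _
  cases n with
  | ofNat m =>
    obtain ⟨c, hc⟩ := key β x hx m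
    exact ⟨c, fun t => by rw [Int.ofNat_eq_coe, zpow_natCast]; exact hc t⟩
  | negSucc m =>
    obtain ⟨c, hc⟩ := key β⁻¹ y hinv (m + 1)
    refine ⟨c, fun t => ?_⟩
    rw [zpow_negSucc, ← inv_pow]
    exact hc t
end

section
/- In an RC-loop L, if β is a right translation, then βⁿ is a right translation for every integer n. -/
/-- In an RC-loop, every integer power of a right translation
(as a permutation) is a right translation. -/
theorem rc_right_translation_zpow (L : Type*) [Mul L] [One L]
    (hone : ∀ a : L, 1 * a = a) (hone' : ∀ a : L, a * 1 = a)
    (hleft : ∀ a : L, Function.Bijective fun y : L => a * y)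
    (hright : ∀ a : L, Function.Bijective fun y : L => y * a)
    (hRC : ∀ x y z : L, z * ((y * x) * x) = ((z * y) * x) * x) :
    ∀ β : Equiv.Perm L, (∃ x : L, ∀ t : L, β t = t * x) →
      ∀ n : ℤ, ∃ c : L, ∀ t : L, (β ^ n) t = t * c := by
  intro β hβ n
  obtain ⟨x, hx⟩ := hβ
  -- the inverse of a right translation is a right translation
  have hinv : ∀ (π : Equiv.Perm L) (c : L), (∀ t, π t = t * c) →
      ∃ c', ∀ t, π⁻¹ t = t * c' := by
    intro π c hc
    obtain ⟨c', hc'⟩ := (hright c).2 1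
    simp only at hc'
    refine ⟨c', fun t => ?_⟩
    have key : π (t * c') = t := by
      rw [hc]
      have h1 := hRC c c' t
      rw [hc', hone] at h1
      exact (hright c).1 h1.symm
    calc π⁻¹ t = π⁻¹ (π (t * c')) := by rw [key]
    _ = t * c' := π.symm_apply_apply _
  have h2 : ∀ s, (β ^ 2) s = (s * x) * x := by
    intro s; rw [pow_two]; simp [Equiv.Perm.mul_apply, hx]
  have hnat : ∀ m : ℕ, (∃ c, ∀ t, (β ^ m) t = t * c) ∧
      (∃ c, ∀ t, (β ^ (m + 1)) t = t * c) := by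
    intro m
    induction m with
    | zero => exact ⟨⟨1, fun t => by simp [hone']⟩, ⟨x, fun t => by simp [hx]⟩⟩
    | succ k ih =>
      refine ⟨ih.2, ?_⟩
      obtain ⟨c, hc⟩ := ih.1
      refine ⟨(c * x) * x, fun t => ?_⟩
      have hsplit : β ^ (k + 1 + 1) = β ^ 2 * β ^ k := by
        rw [show k + 1 + 1 = 2 + k from by omega, pow_add]
      rw [hsplit]
      calc (β ^ 2 * β ^ k) t = (β ^ 2) ((β ^ k) t) := rfl
        _ = ((t * c) * x) * x := by rw [hc, h2]
        _ = t * ((c * x) * x) := (hRC x c t).symm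
  cases n with
  | ofNat m =>
      obtain ⟨c, hc⟩ := (hnat m).1
      exact ⟨c, fun t => by rw [Int.ofNat_eq_coe, zpow_natCast]; exact hc t⟩
  | negSucc m =>
      obtain ⟨c, hc⟩ := (hnat (m + 1)).1
      obtain ⟨c', hc'⟩ := hinv (β ^ (m + 1)) c hc
      exact ⟨c', fun t => by rw [zpow_negSucc]; exact hc' t⟩
end

section
/- In a C-loop L, if α is a left translation then αⁿ is a left translation for every integer n, and similarly every integer power of a right translation is a right translation. -/
section Aux
variable {L : Type*} [Mul L] [One L]

theorem cl_left_nat (hone : ∀ a : L, 1 * a = a)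
    (hC : ∀ x y z : L, x * (y * (y * z)) = ((x * y) * y) * z)
    (α : Equiv.Perm L) (x : L) (hα : ∀ t, α t = x * t) :
    ∀ n : ℕ, ∃ c : L, ∀ t : L, (α ^ n) t = c * t := by
  intro n
  induction n using Nat.twoStepInduction with
  | zero => exact ⟨1, fun t => by simp [hone]⟩
  | one => exact ⟨x, fun t => by simpa using hα t⟩
  | more n ih _ =>
    obtain ⟨c, hc⟩ := ih
    refine ⟨(c * x) * x, fun t => ?_⟩
    have h1 : (α ^ (n + 2)) t = (α ^ n) (α (α t)) := by
      rw [pow_succ, pow_succ]; rfl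
    rw [h1, hα, hα, hc, hC]

theorem cl_right_nat (hone' : ∀ a : L, a * 1 = a)
    (hC : ∀ x y z : L, x * (y * (y * z)) = ((x * y) * y) * z)
    (α : Equiv.Perm L) (x : L) (hα : ∀ t, α t = t * x) :
    ∀ n : ℕ, ∃ c : L, ∀ t : L, (α ^ n) t = t * c := by
  intro n
  induction n using Nat.twoStepInduction with
  | zero => exact ⟨1, fun t => by simp [hone']⟩
  | one => exact ⟨x, fun t => by simpa using hα t⟩
  | more n ih _ =>
    obtain ⟨c, hc⟩ := ih
    refine ⟨x * (x * c), fun t => ?_⟩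
    have h1 : (α ^ (n + 2)) t = (α ^ n) (α (α t)) := by
      rw [pow_succ, pow_succ]; rfl
    rw [h1, hα, hα, hc, hC]

theorem cl_left_inv (hleft : ∀ a : L, Function.Bijective fun y : L => a * y)
    (hright : ∀ a : L, Function.Bijective fun y : L => y * a)
    (hC : ∀ x y z : L, x * (y * (y * z)) = ((x * y) * y) * z)
    (α : Equiv.Perm L) (x : L) (hα : ∀ t, α t = x * t) :
    ∃ a : L, ∀ t : L, α⁻¹ t = a * t := by
  obtain ⟨b, hb⟩ := (hright x).2 x
  obtain ⟨a, ha⟩ := (hright x).2 b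
  simp only at hb ha
  -- (a*x)*x = x
  have hax : (a * x) * x = x := by rw [ha, hb]
  have key : ∀ u : L, a * (x * u) = u := by
    intro u
    obtain ⟨z, hz⟩ := (hleft x).2 u
    simp only at hz
    calc a * (x * u) = a * (x * (x * z)) := by rw [hz]
    _ = ((a * x) * x) * z := hC a x z
    _ = x * z := by rw [hax]
    _ = u := hz
  refine ⟨a, fun t => ?_⟩
  have ht : t = x * (α⁻¹ t) := by
    conv_lhs => rw [← α.apply_symm_apply t]
    exact hα _
  conv_rhs => rw [ht]
  exact (key _).symm

theorem cl_right_inv (hleft : ∀ a : L, Function.Bijective fun y : L => a * y)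
    (hright : ∀ a : L, Function.Bijective fun y : L => y * a)
    (hC : ∀ x y z : L, x * (y * (y * z)) = ((x * y) * y) * z)
    (α : Equiv.Perm L) (x : L) (hα : ∀ t, α t = t * x) :
    ∃ a : L, ∀ t : L, α⁻¹ t = t * a := by
  obtain ⟨b, hb⟩ := (hleft x).2 x
  obtain ⟨z, hz⟩ := (hleft x).2 b
  simp only at hb hz
  have hax : x * (x * z) = x := by rw [hz, hb]
  have key : ∀ u : L, (u * x) * z = u := by
    intro u
    obtain ⟨w, hw⟩ := (hright x).2 u
    simp only at hw
    calc (u * x) * z = ((w * x) * x) * z := by rw [hw]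
    _ = w * (x * (x * z)) := (hC w x z).symm
    _ = w * x := by rw [hax]
    _ = u := hw
  refine ⟨z, fun t => ?_⟩
  have ht : t = (α⁻¹ t) * x := by
    conv_lhs => rw [← α.apply_symm_apply t]
    exact hα _
  conv_rhs => rw [ht]
  exact (key _).symm

end Aux

/-- In a C-loop, every integer power of a left translation is a
left translation, and every integer power of a right translation is a right
translation. -/
theorem c_translation_zpow (L : Type*) [Mul L] [One L]
    (hone : ∀ a : L, 1 * a = a) (hone' : ∀ a : L, a * 1 = a)
    (hleft : ∀ a : L, Function.Bijective fun y : L => a * y)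
    (hright : ∀ a : L, Function.Bijective fun y : L => y * a)
    (hC : ∀ x y z : L, x * (y * (y * z)) = ((x * y) * y) * z) :
    (∀ α : Equiv.Perm L, (∃ x : L, ∀ t : L, α t = x * t) →
      ∀ n : ℤ, ∃ c : L, ∀ t : L, (α ^ n) t = c * t) ∧
    (∀ α : Equiv.Perm L, (∃ x : L, ∀ t : L, α t = t * x) →
      ∀ n : ℤ, ∃ c : L, ∀ t : L, (α ^ n) t = t * c) := by
  constructor
  · rintro α ⟨x, hα⟩ n
    cases n with
    | ofNat m =>
      obtain ⟨c, hc⟩ := cl_left_nat hone hC α x hα m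
      exact ⟨c, fun t => by rw [Int.ofNat_eq_coe, zpow_natCast]; exact hc t⟩
    | negSucc m =>
      obtain ⟨a, ha⟩ := cl_left_inv hleft hright hC α x hα
      obtain ⟨c, hc⟩ := cl_left_nat hone hC α⁻¹ a ha (m + 1)
      refine ⟨c, fun t => ?_⟩
      rw [zpow_negSucc, ← inv_pow]
      exact hc t
  · rintro α ⟨x, hα⟩ n
    cases n with
    | ofNat m =>
      obtain ⟨c, hc⟩ := cl_right_nat hone' hC α x hα m
      exact ⟨c, fun t => by rw [Int.ofNat_eq_coe, zpow_natCast]; exact hc t⟩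
    | negSucc m =>
      obtain ⟨a, ha⟩ := cl_right_inv hleft hright hC α x hα
      obtain ⟨c, hc⟩ := cl_right_nat hone' hC α⁻¹ a ha (m + 1)
      refine ⟨c, fun t => ?_⟩
      rw [zpow_negSucc, ← inv_pow]
      exact hc t
end

section
/- Let (G,·) and (H,∘) be loops and suppose (A,B,B) is an isotopism from G to H (i.e., A,B : G → H are bijections with A(x) ∘ B(y) = B(x·y) for all x,y ∈ G). Then G is an LC-loop if and only if H is an LC-loop. -/
theorem lc_aux {G H : Type*} [Mul G] [Mul H] [One H]
    (honeH' : ∀ a : H, a * 1 = a)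
    (hrightG : ∀ a : G, Function.Bijective fun y : G => y * a)
    (A B : G → H) (hB : Function.Bijective B)
    (hiso : ∀ x y : G, A x * B y = B (x * y))
    (hLC : ∀ x y z : G, (x * (x * y)) * z = x * (x * (y * z))) :
    ∀ x y z : H, (x * (x * y)) * z = x * (x * (y * z)) := by
  obtain ⟨b, hb⟩ := hB.surjective 1
  have hAB : ∀ x, A x = B (x * b) := fun x => by rw [← hiso, hb, honeH']
  have hAs : Function.Surjective A := by
    intro u
    obtain ⟨q, hq⟩ := hB.surjective u
    obtain ⟨p, hp⟩ := (hrightG b).surjective q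
    simp only at hp
    exact ⟨p, by rw [hAB, hp, hq]⟩
  intro u v w
  obtain ⟨p, rfl⟩ := hAs u
  obtain ⟨q, rfl⟩ := hB.surjective v
  obtain ⟨r, rfl⟩ := hB.surjective w
  obtain ⟨t, ht⟩ := (hrightG b).surjective q
  simp only at ht
  obtain ⟨s, hs⟩ := (hrightG b).surjective (p * (p * q))
  simp only at hs
  have hs' : s = p * (p * t) := (hrightG b).injective (by
    show s * b = (p * (p * t)) * b
    rw [hs, ← ht, hLC])
  have hAt : A t = B q := by rw [hAB, ht]
  calc (A p * (A p * B q)) * B r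
      = B (p * (p * q)) * B r := by rw [hiso, hiso]
    _ = A s * B r := by rw [hAB, hs]
    _ = B (s * r) := hiso s r
    _ = B (p * (p * (t * r))) := by rw [hs', hLC]
    _ = A p * B (p * (t * r)) := (hiso p (p * (t * r))).symm
    _ = A p * (A p * B (t * r)) := by rw [hiso p (t * r)]
    _ = A p * (A p * (A t * B r)) := by rw [hiso t r]
    _ = A p * (A p * (B q * B r)) := by rw [hAt]

/-- If `(A, B, B)` is an isotopism from loop `G` to loop `H`,
then `G` is an LC-loop iff `H` is an LC-loop. -/
theorem lc_isotopy_invariant (G H : Type*) [Mul G] [One G] [Mul H] [One H]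
    (honeG : ∀ a : G, 1 * a = a) (honeG' : ∀ a : G, a * 1 = a)
    (hleftG : ∀ a : G, Function.Bijective fun y : G => a * y)
    (hrightG : ∀ a : G, Function.Bijective fun y : G => y * a)
    (honeH : ∀ a : H, 1 * a = a) (honeH' : ∀ a : H, a * 1 = a)
    (hleftH : ∀ a : H, Function.Bijective fun y : H => a * y)
    (hrightH : ∀ a : H, Function.Bijective fun y : H => y * a)
    (A B : G → H) (hA : Function.Bijective A) (hB : Function.Bijective B)
    (hiso : ∀ x y : G, A x * B y = B (x * y)) :
    (∀ x y z : G, (x * (x * y)) * z = x * (x * (y * z))) ↔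
      (∀ x y z : H, (x * (x * y)) * z = x * (x * (y * z))) := by
  constructor
  · exact lc_aux honeH' hrightG A B hB hiso
  · intro hLC
    set eA := Equiv.ofBijective A hA with heA
    set eB := Equiv.ofBijective B hB with heB
    have hiso' : ∀ u v : H, eA.symm u * eB.symm v = eB.symm (u * v) := by
      intro u v
      apply hB.injective
      have h1 : B (eB.symm (u * v)) = u * v := eB.apply_symm_apply (u * v)
      have h2 : B (eA.symm u * eB.symm v)
          = A (eA.symm u) * B (eB.symm v) := (hiso _ _).symm
      have h3 : A (eA.symm u) = u := eA.apply_symm_apply u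
      have h4 : B (eB.symm v) = v := eB.apply_symm_apply v
      rw [h1, h2, h3, h4]
    exact lc_aux honeG' hrightH eA.symm eB.symm eB.symm.bijective hiso' hLC
end

section
/- Let (G,·) and (H,∘) be loops and suppose (A,B,A) is an isotopism from G to H (i.e., A(x) ∘ B(y) = A(x·y) for all x,y ∈ G). Then G is an RC-loop if and only if H is an RC-loop. -/
/-- If `(A, B, A)` is an isotopism from loop `G` to loop `H`,
then `G` is an RC-loop iff `H` is an RC-loop. -/
theorem rc_isotopy_invariant (G H : Type*) [Mul G] [One G] [Mul H] [One H]
    (honeG : ∀ a : G, 1 * a = a) (honeG' : ∀ a : G, a * 1 = a)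
    (hleftG : ∀ a : G, Function.Bijective fun y : G => a * y)
    (hrightG : ∀ a : G, Function.Bijective fun y : G => y * a)
    (honeH : ∀ a : H, 1 * a = a) (honeH' : ∀ a : H, a * 1 = a)
    (hleftH : ∀ a : H, Function.Bijective fun y : H => a * y)
    (hrightH : ∀ a : H, Function.Bijective fun y : H => y * a)
    (A B : G → H) (hA : Function.Bijective A) (hB : Function.Bijective B)
    (hiso : ∀ x y : G, A x * B y = A (x * y)) :
    (∀ x y z : G, z * ((y * x) * x) = ((z * y) * x) * x) ↔
      (∀ x y z : H, z * ((y * x) * x) = ((z * y) * x) * x) := by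
  constructor
  · intro hG a b c
    obtain ⟨z, rfl⟩ := hA.2 c
    obtain ⟨y, rfl⟩ := hB.2 b
    obtain ⟨x, rfl⟩ := hB.2 a
    obtain ⟨e, he⟩ := hA.2 1
    have key : ∀ w : G, A w * B ((y * x) * x) = ((A w * B y) * B x) * B x := by
      intro w
      rw [hiso, hiso, hiso, hiso, hG]
    have h0 := key e
    rw [he, honeH, honeH] at h0
    rw [← h0, hiso, hG, hiso, hiso, hiso]
  · intro hH x y z
    apply hA.1
    have key : B ((y * x) * x) = (B y * B x) * B x := by
      apply (hleftH (A 1)).1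
      show A 1 * B ((y * x) * x) = A 1 * ((B y * B x) * B x)
      rw [hH, hiso, honeG, hiso, honeG, hiso, hiso]
    rw [← hiso, key, hH, hiso, hiso, hiso]
end

section
/- Let (G,·) and (H,∘) be commutative loops and suppose there is an isotopism of the form (A,B,B) from G to H. Then G is a C-loop if and only if H is a C-loop. -/
private theorem c_transfer_aux {G H : Type*} [Mul G] [One G] [Mul H] [One H]
    (honeG : ∀ a : G, 1 * a = a) (honeG' : ∀ a : G, a * 1 = a)
    (honeH' : ∀ a : H, a * 1 = a)
    (hcommH : ∀ a b : H, a * b = b * a)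
    (A B : G → H) (hA : Function.Surjective A) (hB : Function.Surjective B)
    (hiso : ∀ x y : G, A x * B y = B (x * y))
    (hC : ∀ x y z : G, x * (y * (y * z)) = ((x * y) * y) * z) :
    ∀ x y z : H, x * (y * (y * z)) = ((x * y) * y) * z := by
  -- left alternative law in G
  have lc : ∀ y z : G, y * (y * z) = (y * y) * z := by
    intro y z
    have h := hC 1 y z
    rwa [honeG, honeG] at h
  -- right alternative / square law in G
  have sq : ∀ x y : G, x * (y * y) = (x * y) * y := by
    intro x y
    have h := hC x y 1
    rwa [honeG', honeG'] at h
  -- squares are nuclear in G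
  have nuc : ∀ x y z : G, x * ((y * y) * z) = (x * (y * y)) * z := by
    intro x y z
    rw [← lc, hC, ← sq]
  -- transported left alternative law
  have star : ∀ (y : G) (u : H), A y * (A y * u) = A (y * y) * u := by
    intro y u
    obtain ⟨z, rfl⟩ := hB u
    rw [hiso, hiso, lc, ← hiso]
  have sqH : ∀ y : G, A (y * y) = A y * A y := by
    intro y
    have h := star y 1
    rw [honeH', honeH'] at h
    exact h.symm
  have Lh : ∀ v u : H, v * (v * u) = (v * v) * u := by
    intro v u
    obtain ⟨y, rfl⟩ := hA v
    rw [star, sqH]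
  -- transported nuclearity of squares
  have nucA : ∀ (x y : G) (u : H), A x * (A (y * y) * u) = A (x * (y * y)) * u := by
    intro x y u
    obtain ⟨z, rfl⟩ := hB u
    rw [hiso, hiso, nuc, ← hiso]
  have mulA_sq : ∀ x y : G, A (x * (y * y)) = A x * A (y * y) := by
    intro x y
    have h := nucA x y 1
    rw [honeH', honeH'] at h
    exact h.symm
  have nucH : ∀ s v u : H, s * ((v * v) * u) = (s * (v * v)) * u := by
    intro s v u
    obtain ⟨x, rfl⟩ := hA s
    obtain ⟨y, rfl⟩ := hA v
    rw [← sqH, nucA, mulA_sq]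
  intro x y z
  rw [Lh, nucH]
  have : x * (y * y) = (x * y) * y := by
    rw [hcommH (x * y) y, hcommH x y, Lh, hcommH]
  rw [this]

/-- If `(A, B, B)` is an isotopism between commutative loops
`G` and `H`, then `G` is a C-loop iff `H` is a C-loop. -/
theorem c_isotopy_invariant_comm (G H : Type*) [Mul G] [One G] [Mul H] [One H]
    (honeG : ∀ a : G, 1 * a = a) (honeG' : ∀ a : G, a * 1 = a)
    (hleftG : ∀ a : G, Function.Bijective fun y : G => a * y)
    (hrightG : ∀ a : G, Function.Bijective fun y : G => y * a)
    (hcommG : ∀ a b : G, a * b = b * a)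
    (honeH : ∀ a : H, 1 * a = a) (honeH' : ∀ a : H, a * 1 = a)
    (hleftH : ∀ a : H, Function.Bijective fun y : H => a * y)
    (hrightH : ∀ a : H, Function.Bijective fun y : H => y * a)
    (hcommH : ∀ a b : H, a * b = b * a)
    (A B : G → H) (hA : Function.Bijective A) (hB : Function.Bijective B)
    (hiso : ∀ x y : G, A x * B y = B (x * y)) :
    (∀ x y z : G, x * (y * (y * z)) = ((x * y) * y) * z) ↔
      (∀ x y z : H, x * (y * (y * z)) = ((x * y) * y) * z) := by
  constructor
  · intro hC
    exact c_transfer_aux honeG honeG' honeH' hcommH A B hA.surjective hB.surjective hiso hC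
  · intro hC
    set eA := Equiv.ofBijective A hA with heA
    set eB := Equiv.ofBijective B hB with heB
    have hiso' : ∀ u v : H, eA.symm u * eB.symm v = eB.symm (u * v) := by
      intro u v
      apply eB.injective
      have h1 : eB (eA.symm u * eB.symm v) = B (eA.symm u * eB.symm v) := rfl
      rw [h1, ← hiso]
      have h2 : A (eA.symm u) = eA (eA.symm u) := rfl
      rw [h2, eA.apply_symm_apply]
      have h3 : B (eB.symm v) = eB (eB.symm v) := rfl
      rw [h3, eB.apply_symm_apply, eB.apply_symm_apply]
    exact c_transfer_aux honeH honeH' honeG' hcommG eA.symm eB.symm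
      eA.symm.surjective eB.symm.surjective hiso' hC
end

section
/- Every C-loop is both an LC-loop and an RC-loop; conversely, a loop that is both an LC-loop and an RC-loop is a C-loop. -/
section CLoopAux

variable {L : Type*} [Mul L] [One L]

private lemma c_loop_fwd
    (hone : ∀ a : L, 1 * a = a) (hone' : ∀ a : L, a * 1 = a)
    (hleft : ∀ a : L, Function.Bijective fun y : L => a * y)
    (hright : ∀ a : L, Function.Bijective fun y : L => y * a)
    (C : ∀ x y z : L, x * (y * (y * z)) = ((x * y) * y) * z) :
    (∀ x y z : L, (x * x) * (y * z) = (x * (x * y)) * z) ∧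
      (∀ x y z : L, (z * y) * (x * x) = z * ((y * x) * x)) := by
  classical
  have lcan : ∀ (a : L) {x y : L}, a * x = a * y → x = y := by
    intro a x y h; exact (hleft a).1 h
  have rcan : ∀ (a : L) {x y : L}, x * a = y * a → x = y := by
    intro a x y h; exact (hright a).1 h
  choose ρ hρ0 using fun a : L => (hleft a).2 1
  have hρ : ∀ a : L, a * ρ a = 1 := hρ0
  choose lam hlam0 using fun a : L => (hright a).2 1
  have hlam : ∀ a : L, lam a * a = 1 := hlam0
  have LA : ∀ a b : L, a * (a * b) = (a * a) * b := by
    intro a b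
    have h := C 1 a b
    simpa [hone] using h
  have RA : ∀ a b : L, (a * b) * b = a * (b * b) := by
    intro a b
    have h := C a b 1
    simpa [hone'] using h.symm
  have Nmu : ∀ u y v : L, u * ((y * y) * v) = (u * (y * y)) * v := by
    intro u y v
    have h := C u y v
    rw [LA y v, RA u y] at h
    exact h
  have RIP : ∀ v y : L, (v * y) * ρ y = v := by
    intro v y
    obtain ⟨u, hu0⟩ := (hright y).2 v
    have hu : u * y = v := hu0
    have h := C u y (ρ y)
    rw [hρ y, hone' y, hu] at h
    exact h.symm
  have LIP0 : ∀ y w : L, lam y * (y * w) = w := by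
    intro y w
    obtain ⟨z, hz0⟩ := (hleft y).2 w
    have hz : y * z = w := hz0
    have h := C (lam y) y z
    rw [hlam y, hone y, hz] at h
    exact h
  have lam_eq : ∀ y : L, lam y = ρ y := by
    intro y
    have h := RIP (lam y) y
    rw [hlam y, hone] at h
    exact h.symm
  have hρ' : ∀ a : L, ρ a * a = 1 := by
    intro a; rw [← lam_eq]; exact hlam a
  have LIP : ∀ y w : L, ρ y * (y * w) = w := by
    intro y w; rw [← lam_eq]; exact LIP0 y w
  have inv_inv : ∀ a : L, ρ (ρ a) = a := by
    intro a
    apply lcan (ρ a)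
    rw [hρ (ρ a), hρ' a]
  have cLIP : ∀ y w : L, y * (ρ y * w) = w := by
    intro y w
    have h := LIP (ρ y) w
    rw [inv_inv y] at h
    exact h
  have cRIP : ∀ v y : L, (v * ρ y) * y = v := by
    intro v y
    have h := RIP v (ρ y)
    rw [inv_inv y] at h
    exact h
  have solveL : ∀ p q w : L, p * q = w → q = ρ p * w := by
    intro p q w h; rw [← h]; exact (LIP p q).symm
  have solveR : ∀ p q w : L, p * q = w → p = w * ρ q := by
    intro p q w h; rw [← h]; exact (RIP p q).symm
  have AAIP : ∀ a b : L, ρ (a * b) = ρ b * ρ a := by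
    intro a b
    have h1 : b * (ρ b * ρ a) = ρ a := cLIP b (ρ a)
    have h2 : b = ρ a * ρ (ρ b * ρ a) := solveR b (ρ b * ρ a) (ρ a) h1
    have h3 : a * b = ρ (ρ b * ρ a) := by
      conv_lhs => rw [h2]
      exact cLIP a (ρ (ρ b * ρ a))
    rw [h3, inv_inv]
  have NmuNl : ∀ s : L, (∀ u v : L, u * (s * v) = (u * s) * v) →
      ∀ t w : L, ρ s * (t * w) = (ρ s * t) * w := by
    intro s hs t w
    have key : (ρ t * s) * (ρ s * (t * w)) = w := by
      rw [← hs (ρ t) (ρ s * (t * w)), cLIP s (t * w)]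
      exact LIP t w
    have h := solveL (ρ t * s) (ρ s * (t * w)) w key
    rw [AAIP (ρ t) s, inv_inv t] at h
    exact h
  have NmuNr : ∀ s : L, (∀ u v : L, u * (s * v) = (u * s) * v) →
      ∀ w t : L, (w * t) * ρ s = w * (t * ρ s) := by
    intro s hs w t
    have key : ((w * t) * ρ s) * (s * ρ t) = w := by
      rw [hs ((w * t) * ρ s) (ρ t), cRIP (w * t) s]
      exact RIP w t
    have h := solveR ((w * t) * ρ s) (s * ρ t) w key
    rw [AAIP s (ρ t), inv_inv t] at h
    exact h
  have hsq : ∀ x : L, ρ (ρ x * ρ x) = x * x := by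
    intro x; rw [AAIP, inv_inv]
  constructor
  · intro x y z
    have h := NmuNl (ρ x * ρ x) (fun u v => Nmu u (ρ x) v) y z
    rw [hsq x] at h
    rw [LA x y]
    exact h
  · intro x y z
    have h := NmuNr (ρ x * ρ x) (fun u v => Nmu u (ρ x) v) z y
    rw [hsq x] at h
    rw [RA y x]
    exact h

private lemma c_loop_bwd
    (hone : ∀ a : L, 1 * a = a) (hone' : ∀ a : L, a * 1 = a)
    (hleft : ∀ a : L, Function.Bijective fun y : L => a * y)
    (hright : ∀ a : L, Function.Bijective fun y : L => y * a)
    (hLC : ∀ x y z : L, (x * x) * (y * z) = (x * (x * y)) * z)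
    (hRC : ∀ x y z : L, (z * y) * (x * x) = z * ((y * x) * x)) :
    ∀ x y z : L, x * (y * (y * z)) = ((x * y) * y) * z := by
  classical
  have lcan : ∀ (a : L) {x y : L}, a * x = a * y → x = y := by
    intro a x y h; exact (hleft a).1 h
  have rcan : ∀ (a : L) {x y : L}, x * a = y * a → x = y := by
    intro a x y h; exact (hright a).1 h
  choose ρ hρ0 using fun a : L => (hleft a).2 1
  have hρ : ∀ a : L, a * ρ a = 1 := hρ0
  have LA : ∀ a b : L, a * (a * b) = (a * a) * b := by
    intro a b
    have h := hLC a b 1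
    simpa [hone'] using h.symm
  have RA : ∀ a b : L, (a * b) * b = a * (b * b) := by
    intro a b
    have h := hRC b a 1
    simpa [hone] using h.symm
  have Nl : ∀ x a b : L, (x * x) * (a * b) = ((x * x) * a) * b := by
    intro x a b
    have h := hLC x a b
    rw [LA x a] at h
    exact h
  have Nr : ∀ x a b : L, (a * b) * (x * x) = a * (b * (x * x)) := by
    intro x a b
    have h := hRC x b a
    rw [RA b x] at h
    exact h
  have cLIP : ∀ x w : L, x * (ρ x * w) = w := by
    intro x w
    have h : x * (x * (ρ x * w)) = x * w := by
      rw [LA x (ρ x * w), Nl x (ρ x) w, ← LA x (ρ x), hρ x, hone' x]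
    exact lcan x h
  have hρ' : ∀ a : L, ρ a * a = 1 := by
    intro a
    apply lcan a
    rw [cLIP a a, hone' a]
  have inv_inv : ∀ a : L, ρ (ρ a) = a := by
    intro a
    apply lcan (ρ a)
    rw [hρ (ρ a), hρ' a]
  have LIP : ∀ y w : L, ρ y * (y * w) = w := by
    intro y w
    have h := cLIP (ρ y) w
    rw [inv_inv y] at h
    exact h
  have cRIP : ∀ w x : L, (w * ρ x) * x = w := by
    intro w x
    have h : ((w * ρ x) * x) * x = w * x := by
      rw [RA (w * ρ x) x, Nr x w (ρ x), ← RA (ρ x) x, hρ' x, hone x]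
    exact rcan x h
  have RIP : ∀ w x : L, (w * x) * ρ x = w := by
    intro w x
    have h := cRIP w (ρ x)
    rw [inv_inv x] at h
    exact h
  have solveR : ∀ p q w : L, p * q = w → p = w * ρ q := by
    intro p q w h; rw [← h]; exact (RIP p q).symm
  have AAIP : ∀ a b : L, ρ (a * b) = ρ b * ρ a := by
    intro a b
    have h1 : b * (ρ b * ρ a) = ρ a := cLIP b (ρ a)
    have h2 : b = ρ a * ρ (ρ b * ρ a) := solveR b (ρ b * ρ a) (ρ a) h1
    have h3 : a * b = ρ (ρ b * ρ a) := by
      conv_lhs => rw [h2]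
      exact cLIP a (ρ (ρ b * ρ a))
    rw [h3, inv_inv]
  have Nmu : ∀ (u y v : L), u * ((y * y) * v) = (u * (y * y)) * v := by
    intro u y v
    have hNls : ∀ a b : L, ρ (y * y) * (a * b) = (ρ (y * y) * a) * b := by
      intro a b
      rw [AAIP y y]
      exact Nl (ρ y) a b
    have star : ∀ w : L, (u * (y * y)) * (ρ (y * y) * (ρ u * w)) = w := by
      intro w
      rw [hNls (ρ u) w, ← AAIP u (y * y)]
      exact cLIP (u * (y * y)) w
    have h := star (u * ((y * y) * v))
    rw [LIP u ((y * y) * v), LIP (y * y) v] at h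
    exact h.symm
  intro x y z
  rw [LA y z, Nmu x y z, ← RA x y]

end CLoopAux

/-- A loop is a C-loop iff it is both an LC-loop and an
RC-loop. -/
theorem c_iff_lc_and_rc (L : Type*) [Mul L] [One L]
    (hone : ∀ a : L, 1 * a = a) (hone' : ∀ a : L, a * 1 = a)
    (hleft : ∀ a : L, Function.Bijective fun y : L => a * y)
    (hright : ∀ a : L, Function.Bijective fun y : L => y * a) :
    (∀ x y z : L, x * (y * (y * z)) = ((x * y) * y) * z) ↔
      ((∀ x y z : L, (x * x) * (y * z) = (x * (x * y)) * z) ∧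
       (∀ x y z : L, (z * y) * (x * x) = z * ((y * x) * x))) := by
  constructor
  · intro hC
    exact c_loop_fwd hone hone' hleft hright hC
  · rintro ⟨hLC, hRC⟩
    exact c_loop_bwd hone hone' hleft hright hLC hRC
end

section
/- There exists a non-associative C-loop of order 12. -/
private def cTab : Fin 12 → Fin 12 → Fin 12 :=
  ![![0, 1, 2, 3, 4, 5, 6, 7, 8, 9, 10, 11],
    ![1, 8, 9, 0, 6, 10, 5, 11, 7, 4, 2, 3],
    ![2, 10, 8, 6, 11, 0, 1, 9, 4, 3, 7, 5],
    ![3, 0, 10, 11, 9, 6, 4, 8, 1, 2, 5, 7],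
    ![4, 9, 11, 10, 0, 8, 7, 6, 5, 1, 3, 2],
    ![5, 6, 0, 9, 8, 11, 3, 10, 2, 7, 1, 4],
    ![6, 2, 3, 5, 1, 7, 11, 4, 10, 8, 0, 9],
    ![7, 11, 6, 8, 10, 9, 2, 0, 3, 5, 4, 1],
    ![8, 7, 4, 1, 5, 2, 10, 3, 11, 6, 9, 0],
    ![9, 5, 7, 4, 3, 1, 8, 2, 6, 0, 11, 10],
    ![10, 4, 1, 2, 7, 3, 0, 5, 9, 11, 8, 6],
    ![11, 3, 5, 7, 2, 4, 9, 1, 0, 10, 6, 8]]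

/-- There exists a non-associative C-loop of order 12. -/
theorem exists_nonassoc_c_loop_order_12 :
    ∃ (op : Fin 12 → Fin 12 → Fin 12) (e : Fin 12),
      (∀ a, op e a = a) ∧ (∀ a, op a e = a) ∧
      (∀ a, Function.Bijective (op a)) ∧
      (∀ a, Function.Bijective fun b => op b a) ∧
      (∀ x y z, op x (op y (op y z)) = op (op (op x y) y) z) ∧
      (∃ a b c, op (op a b) c ≠ op a (op b c)) := by
  refine ⟨cTab, 0, by decide, by decide, by decide, by decide, by decide, 1, 2, 3, by decide⟩
end
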